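/- Let k be an algebraically closed field, let X and Y be reduced schemes that are locally of finite type over k, and let f, g : X → Y be two morphisms of schemes over k. If the underlying continuous maps of f and g agree at every closed point of X (i.e. f(x) = g(x) for every point x ∈ X whose singleton is closed), then f = g as morphisms of schemes over k. -/

import Mathlib

open AlgebraicGeometry CategoryTheory

lemma algHom_eq_of_surj {k B K : Type*} [Field k] [CommRing B] [CommRing K]
    (cB : k →+* B) (cK : k →+* K)
    (χ₁ χ₂ : B →+* K) (h₁ : χ₁.comp cB = cK) (h₂ : χ₂.comp cB = cK)
    (hsurj : Function.Surjective cK)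
    (hker : RingHom.ker χ₁ = RingHom.ker χ₂) : χ₁ = χ₂ := by
  ext b
  obtain ⟨c, hc⟩ := hsurj (χ₁ b)
  have : b - cB c ∈ RingHom.ker χ₁ := by
    simp [RingHom.mem_ker, hc, ← RingHom.comp_apply, h₁]
  rw [hker, RingHom.mem_ker, map_sub, sub_eq_zero] at this
  rw [this, ← RingHom.comp_apply, h₂, ← hc]

lemma ring_rigidity {k A B : Type*} [Field k] [IsAlgClosed k] [CommRing A] [CommRing B]
    [IsReduced A] (cA : k →+* A) (cB : k →+* B) (hA : cA.FiniteType)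
    (φ ψ : B →+* A) (hφ : φ.comp cB = cA) (hψ : ψ.comp cB = cA)
    (H : ∀ m : Ideal A, m.IsMaximal → m.comap φ = m.comap ψ) : φ = ψ := by
  letI : Algebra k A := cA.toAlgebra
  haveI : Algebra.FiniteType k A := hA
  haveI : IsJacobsonRing A := isJacobsonRing_of_finiteType (A := k)
  ext b
  rw [← sub_eq_zero]
  have hnil : φ b - ψ b ∈ nilradical A := by
    have hj : (nilradical A).jacobson = nilradical A :=
      isJacobsonRing_iff.mp ‹_› _ (Ideal.radical_isRadical _)
    rw [← hj, Ideal.jacobson]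
    refine Ideal.mem_sInf.mpr ?_
    rintro m ⟨-, hm⟩
    letI K := A ⧸ m
    letI : Field K := Ideal.Quotient.field m
    let π : A →+* K := Ideal.Quotient.mk m
    let cK : k →+* K := π.comp cA
    letI : Algebra k K := cK.toAlgebra
    haveI : Algebra.FiniteType k K :=
      (RingHom.FiniteType.comp (RingHom.FiniteType.of_surjective π Ideal.Quotient.mk_surjective) hA : cK.FiniteType)
    haveI : Module.Finite k K := finite_of_finite_type_of_isJacobsonRing k K
    haveI : Algebra.IsIntegral k K := @Algebra.IsIntegral.of_finite k K _ _ _ this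
    have hsurj : Function.Surjective cK :=
      (IsAlgClosed.algebraMap_bijective_of_isIntegral (k := k) (K := K)).2
    have hker : RingHom.ker (π.comp φ) = RingHom.ker (π.comp ψ) := by
      have hπ : RingHom.ker π = m := Ideal.mk_ker
      rw [← RingHom.comap_ker, ← RingHom.comap_ker, hπ]
      exact H m hm
    have := algHom_eq_of_surj cB cK (π.comp φ) (π.comp ψ)
      (by rw [RingHom.comp_assoc, hφ]) (by rw [RingHom.comp_assoc, hψ]) hsurj hker
    have hb : π (φ b) = π (ψ b) := by
      simpa [RingHom.comp_apply] using congrFun (congrArg DFunLike.coe this) b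
    exact Ideal.Quotient.eq.mp hb
  rw [nilradical_eq_zero] at hnil
  simpa using hnil

lemma jacobson_of_lft {k : Type} [Field k] [IsAlgClosed k] {X : Scheme}
    (πX : X ⟶ Spec (CommRingCat.of k)) [LocallyOfFiniteType πX] :
    JacobsonSpace X := by
  exact LocallyOfFiniteType.jacobsonSpace πX


/-- Rigidity lemma: two morphisms over an algebraically closed field `k` between reduced
schemes locally of finite type over `k` that agree on all closed points are equal. -/
theorem stmt_0 (k : Type) [Field k] [IsAlgClosed k]
    (X Y : Scheme) (πX : X ⟶ Spec (CommRingCat.of k)) (πY : Y ⟶ Spec (CommRingCat.of k))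
    [IsReduced X] [IsReduced Y]
    [LocallyOfFiniteType πX] [LocallyOfFiniteType πY]
    (f g : X ⟶ Y) (hf : f ≫ πY = πX) (hg : g ≫ πY = πX)
    (h : ∀ x : X, IsClosed ({x} : Set X) → f.base x = g.base x) :
    f = g := by
  haveI hJ : JacobsonSpace X := jacobson_of_lft πX
  -- step 1 : preimages of opens agree
  have hpre : ∀ V : Y.Opens, f ⁻¹ᵁ V = g ⁻¹ᵁ V := by
    have key : ∀ (f' g' : X ⟶ Y), (∀ x : X, IsClosed ({x} : Set X) → f'.base x = g'.base x) →
        ∀ V : Y.Opens, (f' ⁻¹ᵁ V : Set X) ⊆ (g' ⁻¹ᵁ V : Set X) := by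
      intro f' g' h' V x hx
      by_contra hx'
      have hS : IsLocallyClosed ((f' ⁻¹ᵁ V : Set X) ∩ (g' ⁻¹ᵁ V : Set X)ᶜ) :=
        ⟨_, _, (f' ⁻¹ᵁ V).2, (g' ⁻¹ᵁ V).2.isClosed_compl, rfl⟩
      obtain ⟨z, ⟨hz1, hz2⟩, hz3⟩ := jacobsonSpace_iff_locallyClosed.mp hJ ((f' ⁻¹ᵁ V : Set X) ∩ (g' ⁻¹ᵁ V : Set X)ᶜ) ⟨x, hx, hx'⟩ hS
      have : g'.base z ∈ V := h' z hz3 ▸ hz1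
      exact hz2 this
    intro V
    exact TopologicalSpace.Opens.ext (subset_antisymm (key f g h V) (key g f (fun x hx => (h x hx).symm) V))
  -- step 2 : appLE agree on affine opens
  have hkey : ∀ (V : Y.Opens) (hV : IsAffineOpen V) (U : X.Opens) (hU : IsAffineOpen U)
      (e : U ≤ f ⁻¹ᵁ V) (e' : U ≤ g ⁻¹ᵁ V),
      f.appLE V U e = g.appLE V U e' := by
    intro V hV U hU e e'
    let ι := Scheme.ΓSpecIso (CommRingCat.of k)
    let cA : CommRingCat.of k ⟶ Γ(X, U) := ι.inv ≫ πX.appLE ⊤ U (fun x _ => trivial)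
    let cB : CommRingCat.of k ⟶ Γ(Y, V) := ι.inv ≫ πY.appLE ⊤ V (fun x _ => trivial)
    have hφ : cB ≫ f.appLE V U e = cA := by
      show ι.inv ≫ (πY.appLE ⊤ V _ ≫ f.appLE V U e) = ι.inv ≫ πX.appLE ⊤ U _
      have hc : ∀ (a b : X ⟶ Spec (CommRingCat.of k)) (hab : a = b) (p1 : U ≤ a ⁻¹ᵁ ⊤)
          (p2 : U ≤ b ⁻¹ᵁ ⊤), a.appLE ⊤ U p1 = b.appLE ⊤ U p2 := by
        rintro a _ rfl p1 p2; rfl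
      exact congrArg (ι.inv ≫ ·) ((Scheme.Hom.appLE_comp_appLE f πY _ _ _ _ _).trans (hc _ _ hf _ _))
    have hψ : cB ≫ g.appLE V U e' = cA := by
      show ι.inv ≫ (πY.appLE ⊤ V _ ≫ g.appLE V U e') = ι.inv ≫ πX.appLE ⊤ U _
      have hc : ∀ (a b : X ⟶ Spec (CommRingCat.of k)) (hab : a = b) (p1 : U ≤ a ⁻¹ᵁ ⊤)
          (p2 : U ≤ b ⁻¹ᵁ ⊤), a.appLE ⊤ U p1 = b.appLE ⊤ U p2 := by
        rintro a _ rfl p1 p2; rfl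
      exact congrArg (ι.inv ≫ ·) ((Scheme.Hom.appLE_comp_appLE g πY _ _ _ _ _).trans (hc _ _ hg _ _))
    have hft : (πX.appLE ⊤ U (fun x _ => trivial)).hom.FiniteType :=
      LocallyOfFiniteType.finiteType_of_affine_subset (f := πX)
        (isAffineOpen_top _) hU (fun x _ => trivial)
    have hftA : (cA.hom : CommRingCat.of k →+* Γ(X, U)).FiniteType :=
      RingHom.FiniteType.comp hft
        (RingHom.FiniteType.of_surjective _
          (Scheme.ΓSpecIso (CommRingCat.of k)).commRingCatIsoToRingEquiv.symm.surjective)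
    haveI : _root_.IsReduced Γ(X, U) := IsReduced.component_reduced _
    -- maximal ideal comap condition
    have hcomap : ∀ m : Ideal Γ(X, U), m.IsMaximal →
        m.comap (f.appLE V U e).hom = m.comap (g.appLE V U e').hom := by
      intro m hm
      set p : PrimeSpectrum Γ(X, U) := ⟨m, hm.isPrime⟩
      set x₀ : X := hU.fromSpec.base p with hx₀
      have hclp : IsClosed ({p} : Set (PrimeSpectrum Γ(X, U))) :=
        (PrimeSpectrum.isClosed_singleton_iff_isMaximal p).mpr hm
      have hemb := (hU.fromSpec).isOpenEmbedding
      have hcl : IsClosed ({x₀} : Set X) := by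
        apply isClosed_singleton_of_isLocallyClosed_singleton
        have : ({x₀} : Set X) = hU.fromSpec.base '' {p} := by exact (Set.image_singleton (f := ⇑hU.fromSpec) (a := p)).symm
        rw [this]
        exact hclp.isLocallyClosed.image hemb.isInducing
          hemb.isOpen_range.isLocallyClosed
      have hbase : f.base x₀ = g.base x₀ := h x₀ hcl
      have h1 : hV.fromSpec.base ((Spec.map (f.appLE V U e)).base p) = f.base x₀ := by
        have e2 := IsAffineOpen.SpecMap_appLE_fromSpec f hV hU e
        exact congr(($e2).base p)
      have h2 : hV.fromSpec.base ((Spec.map (g.appLE V U e')).base p) = g.base x₀ := by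
        have e2 := IsAffineOpen.SpecMap_appLE_fromSpec g hV hU e'
        exact congr(($e2).base p)
      have hinj := hV.fromSpec.isOpenEmbedding.injective
      have : (Spec.map (f.appLE V U e)).base p = (Spec.map (g.appLE V U e')).base p :=
        hinj (by rw [h1, h2, hbase])
      have := congrArg PrimeSpectrum.asIdeal this
      exact this
    exact CommRingCat.hom_ext (ring_rigidity (k := k) cA.hom cB.hom hftA _ _
        (congrArg CommRingCat.Hom.hom hφ) (congrArg CommRingCat.Hom.hom hψ) hcomap)
  -- step 3 : local equality on a cover, then glue
  have hloc : ∀ x : X, ∃ U : X.Opens, x ∈ U ∧ U.ι ≫ f = U.ι ≫ g := by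
    intro x
    obtain ⟨_, ⟨V : Y.Opens, hV, rfl⟩, hxV, -⟩ :=
      (Scheme.isBasis_affineOpens Y).exists_subset_of_mem_open (Set.mem_univ (f.base x)) isOpen_univ
    have hxfV : x ∈ f ⁻¹ᵁ V := hxV
    obtain ⟨_, ⟨U : X.Opens, hU, rfl⟩, hxU, hUle⟩ :=
      (Scheme.isBasis_affineOpens X).exists_subset_of_mem_open hxfV (f ⁻¹ᵁ V).2
    have e : U ≤ f ⁻¹ᵁ V := hUle
    have e' : U ≤ g ⁻¹ᵁ V := (hpre V) ▸ e
    refine ⟨U, hxU, ?_⟩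
    rw [← Scheme.Hom.resLE_comp_ι f e, ← Scheme.Hom.resLE_comp_ι g e']
    congr 1
    haveI : IsAffine V.toScheme := hV
    suffices hsuff : ∀ (U₀ V₀ : _) (eU : U = U₀) (eV : V = V₀) (h1 : U₀ ≤ f ⁻¹ᵁ V₀)
        (h2 : U₀ ≤ g ⁻¹ᵁ V₀), f.appLE V₀ U₀ h1 = g.appLE V₀ U₀ h2 by
      rw [← cancel_mono V.toScheme.isoSpec.hom]
      simp only [Scheme.isoSpec, asIso_hom, Scheme.toSpecΓ_naturality,
        Scheme.Hom.app_eq_appLE, Scheme.Hom.resLE_appLE]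
      congr 2
      apply hsuff <;> simp
    rintro U₀ V₀ rfl rfl h1 h2
    exact hkey V hV U hU h1 h2
  choose U hxU hUfg using hloc
  let 𝒰 : X.OpenCover :=
    Scheme.Cover.mkOfCovers X (fun x => (U x).toScheme) (fun x => (U x).ι)
      (fun x => ⟨x, ⟨x, hxU x⟩, rfl⟩)
  exact 𝒰.hom_ext f g (fun x => hUfg x)
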